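/- In the free symbolic message algebra with constructors including symmetric encryption enc : M → M → M (message, key), suppose the attacker's deducible set is the inductive closure of a frame Φ under public operations including dec, where dec satisfies only dec(enc(m,k), k) = m. If enc(m, k) ∈ Φ, k is an atomic name not deducible from Φ, and m is an atomic name occurring in Φ only under this encryption, then m is not deducible from Φ. In particular, the UTX application cryptogram AC, sent only as enc(⟨AC, h(⟨AC, mk⟩)⟩, k_cb) under the non-deducible card–bank key k_cb, is secret from the attacker. -/
import Mathlib


/-- Free symbolic message algebra with atomic names, pairing, symmetric
encryption and hashing. -/
inductive Msg where
  | name : ℕ → Msg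
  | pair : Msg → Msg → Msg
  | enc : Msg → Msg → Msg
  | hash : Msg → Msg

/-- Dolev–Yao deducibility: the least set containing the frame `Φ`, closed
under pairing, projection, encryption, hashing, and decryption with a
deducible key (`dec(enc(m,k),k) = m` being the only equation for `dec`). -/
inductive Ded (Φ : Set Msg) : Msg → Prop where
  | ax {m} : m ∈ Φ → Ded Φ m
  | pair {a b} : Ded Φ a → Ded Φ b → Ded Φ (.pair a b)
  | fst {a b} : Ded Φ (.pair a b) → Ded Φ a
  | snd {a b} : Ded Φ (.pair a b) → Ded Φ b
  | enc {m k} : Ded Φ m → Ded Φ k → Ded Φ (.enc m k)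
  | hash {m} : Ded Φ m → Ded Φ (.hash m)
  | dec {m k} : Ded Φ (.enc m k) → Ded Φ k → Ded Φ m

/-- `Guarded nm nk u` expresses that every occurrence of the atomic name `nm`
in `u` lies inside the encryption `enc (name nm) (name nk)`. -/
inductive Guarded (nm nk : ℕ) : Msg → Prop where
  | name {n : ℕ} : n ≠ nm → Guarded nm nk (.name n)
  | hide : Guarded nm nk (.enc (.name nm) (.name nk))
  | pair {a b} : Guarded nm nk a → Guarded nm nk b → Guarded nm nk (.pair a b)
  | enc {a b} : Guarded nm nk a → Guarded nm nk b → Guarded nm nk (.enc a b)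
  | hash {a} : Guarded nm nk a → Guarded nm nk (.hash a)

/-- Symbolic secrecy of the UTX application cryptogram: if the atomic message
`name nm` occurs in the frame only under the encryption
`enc (name nm) (name nk)`, and the atomic key `name nk` is not deducible,
then `name nm` is not deducible. -/
theorem utx_cryptogram_secrecy (Φ : Set Msg) (nm nk : ℕ)
    (henc : Msg.enc (.name nm) (.name nk) ∈ Φ)
    (hkey : ¬ Ded Φ (.name nk))
    (hocc : ∀ u ∈ Φ, Guarded nm nk u) :
    ¬ Ded Φ (.name nm) := by
  have key : ∀ t, Ded Φ t → Guarded nm nk t := by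
    intro t ht
    induction ht with
    | ax h => exact hocc _ h
    | pair _ _ iha ihb => exact .pair iha ihb
    | fst _ ih => cases ih with | pair ha hb => exact ha
    | snd _ ih => cases ih with | pair ha hb => exact hb
    | enc _ _ iha ihb => exact .enc iha ihb
    | hash _ ih => exact .hash ih
    | dec _ hk ih _ =>
      cases ih with
      | hide => exact absurd hk hkey
      | enc ha hb => exact ha
  intro h
  cases key _ h with
  | name hn => exact hn rfl
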